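/- Let E ⊆ ℂ be a nonempty closed set satisfying condition (U)_{1,α} for some α > 1. Then there exist positive constants A, C, r₀ and γ, with (log(1/(Ct)))^{−γ} positive and increasing in t on (0, 2r₀), such that for every increasing function g : (0,∞) → (0,∞) satisfying g(t) = (log(1/(Ct)))^{−γ} for all t ∈ (0, 2r₀), and for every a ∈ E and every r ∈ (0, r₀), one has Λ_g(E ∩ B̄(a,r)) ≥ A·g(2r), where B̄(a,r) is the closed disc of center a and radius r. -/

import Mathlib

/-!
Condition `(U)_{1,α}` lets one grow a binary tree inside `E`: every point `x` of level `n` gets a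
second child in the annulus `4 ρ (n + 1) ≤ |y - x| ≤ ρ n / 2`, with `ρ (n + 1) ≍ ρ n ^ α`, so that the
points of level `n` are `3 ρ n`-separated. Following the binary digits of `t ∈ [0, 1)` down the tree
gives a map `G : [0, 1) → E ∩ B̄(a, r)` under which a set of diameter `≤ ρ n` pulls back into a single
dyadic interval of length `2⁻ⁿ`. For `β ρ n = (β r) ^ (α ^ n)` one has
`log (1 / (β ρ n)) = α ^ n log (1 / (β r))`, so with `γ = log_α 2` the gauge `log (1 / (β t)) ^ (-γ)`
halves exactly from one scale to the next. Hence the image of Lebesgue measure under `G` is bounded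
on discs by a multiple of `g (diam)`, and the mass distribution principle gives the lower bound.
-/

open Metric Set
open scoped ENNReal

/-- A set `E ⊆ ℂ` satisfies condition `(U)_{1,α}`. -/
def CondU1 (E : Set ℂ) (α : ℝ) : Prop :=
  ∃ C > (0 : ℝ), ∃ r₀ > (0 : ℝ), ∀ a ∈ E, ∀ r ∈ Set.Ioo (0 : ℝ) r₀,
    ({z : ℂ | C * r ^ α ≤ dist z a ∧ dist z a ≤ r} ∩ E).Nonempty

/-- The `g`-Hausdorff content of `F ⊆ ℂ`:
`Λ_g(F) = inf { ∑ₖ g(diam Bₖ) : (Bₖ) a countable cover of F by closed discs }`. -/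
noncomputable def hContent (g : ℝ → ℝ) (F : Set ℂ) : ℝ≥0∞ :=
  ⨅ (B : ℕ → ℂ × ℝ) (_ : ∀ k, 0 ≤ (B k).2)
    (_ : F ⊆ ⋃ k, closedBall (B k).1 (B k).2),
    ∑' k, ENNReal.ofReal (g (diam (closedBall (B k).1 (B k).2)))

open Filter Topology MeasureTheory

section HalvingSequences

variable {ρ : ℕ → ℝ}

lemma le_div_two_pow_of_le_half (hρ : ∀ n, ρ (n + 1) ≤ ρ n / 2) (n m : ℕ) :
    ρ (n + m) ≤ ρ n / 2 ^ m := by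
  induction m with
  | zero => simp
  | succ m ih =>
    calc ρ (n + (m + 1)) ≤ ρ (n + m) / 2 := hρ (n + m)
      _ ≤ ρ n / 2 ^ m / 2 := by gcongr
      _ = ρ n / 2 ^ (m + 1) := by rw [pow_succ, div_div]

lemma exists_scale_between (hρ : Tendsto ρ atTop (𝓝 0)) {d : ℝ} (hd : 0 < d) :
    ∃ n, ρ (n + 1) < d ∧ (n = 0 ∨ d ≤ ρ n) := by
  classical
  have hex : ∃ m, ρ (m + 1) < d :=
    ((hρ.comp (tendsto_add_atTop_nat 1)).eventually (gt_mem_nhds hd)).exists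
  refine ⟨Nat.find hex, Nat.find_spec hex, ?_⟩
  rcases h : Nat.find hex with _ | k
  · exact Or.inl rfl
  · exact Or.inr (not_lt.1 (Nat.find_min hex (h ▸ Nat.lt_succ_self k)))

lemma exists_tendsto_forall_dist_le {X : Type*} [PseudoMetricSpace X] [CompleteSpace X]
    {u : ℕ → X} (hρ : ∀ n, ρ (n + 1) ≤ ρ n / 2) (hu : ∀ n, dist (u n) (u (n + 1)) ≤ ρ n / 2) :
    ∃ z, Tendsto u atTop (𝓝 z) ∧ ∀ n, dist (u n) z ≤ ρ n := by
  have hgeom : ∀ n m, dist (u (n + m)) (u (n + m + 1)) ≤ ρ n / 2 / 2 ^ m := fun n m =>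
    calc dist (u (n + m)) (u (n + m + 1)) ≤ ρ (n + m) / 2 := hu _
      _ ≤ ρ n / 2 ^ m / 2 := by gcongr; exact le_div_two_pow_of_le_half hρ n m
      _ = ρ n / 2 / 2 ^ m := div_right_comm _ _ _
  obtain ⟨z, hz⟩ := cauchySeq_tendsto_of_complete
    (cauchySeq_of_le_geometric_two (C := ρ 0) (by simpa using hgeom 0))
  refine ⟨z, hz, fun n => ?_⟩
  have hzn : Tendsto (fun m => u (n + m)) atTop (𝓝 z) := by
    simpa only [add_comm n] using (tendsto_add_atTop_iff_nat n).2 hz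
  simpa using dist_le_of_le_geometric_two_of_tendsto₀ (hgeom n) hzn

end HalvingSequences

section CantorTree

variable {X : Type*}

def cantorTree (a : X) (child : X → ℕ → X) : ℕ → ℕ → X
  | 0, _ => a
  | n + 1, j =>
    if j % 2 = 0 then cantorTree a child n (j / 2) else child (cantorTree a child n (j / 2)) n

lemma cantorTree_succ (a : X) (child : X → ℕ → X) (n j : ℕ) : cantorTree a child (n + 1) j =
    if j % 2 = 0 then cantorTree a child n (j / 2) else child (cantorTree a child n (j / 2)) n :=
  rfl

variable [MetricSpace X]

def IsAnnularChoice (E : Set X) (ρ : ℕ → ℝ) (child : X → ℕ → X) : Prop :=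
  ∀ x ∈ E, ∀ n, child x n ∈ E ∧ 4 * ρ (n + 1) ≤ dist (child x n) x ∧ dist (child x n) x ≤ ρ n / 2

variable {E : Set X} {ρ : ℕ → ℝ} {child : X → ℕ → X} {a : X}

lemma cantorTree_mem (hc : IsAnnularChoice E ρ child) (ha : a ∈ E) :
    ∀ n j, cantorTree a child n j ∈ E
  | 0, _ => ha
  | n + 1, j => by
    rw [cantorTree_succ]
    split_ifs
    · exact cantorTree_mem hc ha n _
    · exact (hc _ (cantorTree_mem hc ha n _) n).1

lemma dist_cantorTree_succ_le (hc : IsAnnularChoice E ρ child) (ha : a ∈ E) (hρ : ∀ n, 0 ≤ ρ n)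
    (n j : ℕ) : dist (cantorTree a child (n + 1) j) (cantorTree a child n (j / 2)) ≤ ρ n / 2 := by
  rw [cantorTree_succ]
  split_ifs
  · simpa using div_nonneg (hρ n) zero_le_two
  · exact (hc _ (cantorTree_mem hc ha n _) n).2.2

lemma four_mul_le_dist_cantorTree_sibling (hc : IsAnnularChoice E ρ child) (ha : a ∈ E)
    {n i j : ℕ} (hij : i / 2 = j / 2) (hi : i % 2 = 0) (hj : j % 2 = 1) :
    4 * ρ (n + 1) ≤ dist (cantorTree a child (n + 1) i) (cantorTree a child (n + 1) j) := by
  simp only [cantorTree_succ, hi, hj, if_true, one_ne_zero, if_false, hij]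
  rw [dist_comm]
  exact (hc _ (cantorTree_mem hc ha n _) n).2.1

lemma cantorTree_separated (hc : IsAnnularChoice E ρ child) (ha : a ∈ E) (hρ : ∀ n, 0 < ρ n)
    (hhalf : ∀ n, ρ (n + 1) ≤ ρ n / 2) :
    ∀ n i j, i < 2 ^ n → j < 2 ^ n → i ≠ j →
      3 * ρ n < dist (cantorTree a child n i) (cantorTree a child n j)
  | 0, i, j, hi, hj, hij => by omega
  | n + 1, i, j, hi, hj, hij => by
    have hρ₁ := hρ (n + 1)
    by_cases hsib : i / 2 = j / 2
    · rcases Nat.mod_two_eq_zero_or_one i with hi₀ | hi₁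
      · have := four_mul_le_dist_cantorTree_sibling (n := n) hc ha hsib hi₀ (by omega)
        linarith
      · have := four_mul_le_dist_cantorTree_sibling (n := n) hc ha hsib.symm (by omega) hi₁
        rw [dist_comm] at this
        linarith
    · have hparents := cantorTree_separated hc ha hρ hhalf n (i / 2) (j / 2)
        (by rw [pow_succ] at hi; omega) (by rw [pow_succ] at hj; omega) hsib
      have hi' := dist_cantorTree_succ_le hc ha (fun n => (hρ n).le) n i
      have hj' := dist_cantorTree_succ_le hc ha (fun n => (hρ n).le) n j
      have := dist_triangle4 (cantorTree a child n (i / 2)) (cantorTree a child (n + 1) i)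
        (cantorTree a child (n + 1) j) (cantorTree a child n (j / 2))
      rw [dist_comm (cantorTree a child n (i / 2)) (cantorTree a child (n + 1) i)] at this
      linarith [hhalf n]

end CantorTree

section DyadicCoding

variable {X : Type*} [MetricSpace X]

lemma floor_two_pow_succ_mul_div_two (n : ℕ) (t : ℝ) :
    ⌊(2 : ℝ) ^ (n + 1) * t⌋₊ / 2 = ⌊(2 : ℝ) ^ n * t⌋₊ := by
  rw [← Nat.floor_div_natCast]
  congr 1
  push_cast
  ring

lemma floor_two_pow_mul_lt {t : ℝ} (ht : t ∈ Ico (0 : ℝ) 1) (n : ℕ) :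
    ⌊(2 : ℝ) ^ n * t⌋₊ < 2 ^ n := by
  rw [Nat.floor_lt (by positivity [ht.1])]
  push_cast
  exact mul_lt_of_lt_one_right (by positivity) ht.2

lemma volume_restrict_preimage_le_of_separated {G : ℝ → X} {P : ℕ → X} {n : ℕ} {δ : ℝ}
    (hsep : ∀ i j, i < 2 ^ n → j < 2 ^ n → i ≠ j → 3 * δ < dist (P i) (P j))
    (hG : ∀ t, dist (G t) (P ⌊(2 : ℝ) ^ n * t⌋₊) ≤ δ)
    {S : Set X} (hS : Bornology.IsBounded S) (hdiam : diam S ≤ δ) :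
    volume.restrict (Ico (0 : ℝ) 1) (G ⁻¹' S) ≤ ENNReal.ofReal ((2 ^ n)⁻¹) := by
  rw [Measure.restrict_apply' measurableSet_Ico]
  rcases (G ⁻¹' S ∩ Ico 0 1).eq_empty_or_nonempty with hempty | ⟨t₀, ht₀S, ht₀⟩
  · simp [hempty]
  set j := ⌊(2 : ℝ) ^ n * t₀⌋₊
  have hsub : G ⁻¹' S ∩ Ico 0 1 ⊆ Ico (j / 2 ^ n) ((j + 1) / 2 ^ n) := by
    rintro t ⟨htS, ht⟩
    have hfloor : ⌊(2 : ℝ) ^ n * t⌋₊ = j := by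
      by_contra hne
      have := hsep _ _ (floor_two_pow_mul_lt ht n) (floor_two_pow_mul_lt ht₀ n) hne
      have := dist_triangle4 (P ⌊(2 : ℝ) ^ n * t⌋₊) (G t) (G t₀) (P j)
      rw [dist_comm (P _) (G t)] at this
      linarith [hG t, hG t₀, dist_le_diam_of_mem hS htS ht₀S]
    have := (Nat.floor_eq_iff (by positivity [ht.1])).1 hfloor
    constructor
    · rw [div_le_iff₀ (by positivity)]; linarith
    · rw [lt_div_iff₀ (by positivity)]; linarith
  calc volume (G ⁻¹' S ∩ Ico 0 1) ≤ volume (Ico ((j : ℝ) / 2 ^ n) ((j + 1) / 2 ^ n)) :=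
        measure_mono hsub
    _ = ENNReal.ofReal ((2 ^ n)⁻¹) := by rw [Real.volume_Ico]; congr 1; ring

theorem exists_dyadic_coding [CompleteSpace X] {E : Set X} (hE : IsClosed E) {a : X} (ha : a ∈ E)
    {ρ : ℕ → ℝ} (hρ : ∀ n, 0 < ρ n) (hhalf : ∀ n, ρ (n + 1) ≤ ρ n / 2)
    (hchild : ∀ x ∈ E, ∀ n, ∃ y ∈ E, 4 * ρ (n + 1) ≤ dist y x ∧ dist y x ≤ ρ n / 2) :
    ∃ G : ℝ → X, (∀ t, G t ∈ E ∩ closedBall a (ρ 0)) ∧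
      ∀ n (S : Set X), Bornology.IsBounded S → diam S ≤ ρ n →
        volume.restrict (Ico (0 : ℝ) 1) (G ⁻¹' S) ≤ ENNReal.ofReal ((2 ^ n)⁻¹) := by
  choose! child hchild using hchild
  have hc : IsAnnularChoice E ρ child := hchild
  set Y := cantorTree a child
  have hlim : ∀ t : ℝ, ∃ z, Tendsto (fun n => Y n ⌊(2 : ℝ) ^ n * t⌋₊) atTop (𝓝 z) ∧
      ∀ n, dist (Y n ⌊(2 : ℝ) ^ n * t⌋₊) z ≤ ρ n := fun t =>
    exists_tendsto_forall_dist_le hhalf fun n => by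
      rw [dist_comm, ← floor_two_pow_succ_mul_div_two n t]
      exact dist_cantorTree_succ_le hc ha (fun n => (hρ n).le) n _
  choose G hGlim hGdist using hlim
  refine ⟨G, fun t => ⟨?_, ?_⟩, fun n S hS hdiam => ?_⟩
  · exact hE.mem_of_tendsto (hGlim t) (Eventually.of_forall fun n => cantorTree_mem hc ha n _)
  · simpa [Y, cantorTree, dist_comm] using hGdist t 0
  · refine volume_restrict_preimage_le_of_separated (cantorTree_separated hc ha hρ hhalf n)
      (fun t => ?_) hS hdiam
    rw [dist_comm]
    exact hGdist t n

end DyadicCoding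

lemma le_hContent_of_forall_closedBall {Ω : Type*} [MeasurableSpace Ω] (μ : Measure Ω)
    (G : Ω → ℂ) {g : ℝ → ℝ}
    (h : ∀ z s, 0 ≤ s → μ (G ⁻¹' closedBall z s) ≤ ENNReal.ofReal (g (diam (closedBall z s))))
    (F : Set ℂ) : μ (G ⁻¹' F) ≤ hContent g F := by
  refine le_iInf fun B => le_iInf fun hB => le_iInf fun hcov => ?_
  calc μ (G ⁻¹' F) ≤ μ (⋃ k, G ⁻¹' closedBall (B k).1 (B k).2) := by
        rw [← preimage_iUnion]; exact measure_mono (preimage_mono hcov)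
    _ ≤ ∑' k, μ (G ⁻¹' closedBall (B k).1 (B k).2) := measure_iUnion_le _
    _ ≤ _ := ENNReal.tsum_le_tsum fun k => h _ _ (hB k)

lemma eq_zero_of_forall_le_inv_two_pow {x : ℝ≥0∞} (h : ∀ n : ℕ, x ≤ ENNReal.ofReal ((2 ^ n)⁻¹)) :
    x = 0 := by
  have hlim : Tendsto (fun n : ℕ => ENNReal.ofReal (((2 : ℝ) ^ n)⁻¹)) atTop (𝓝 0) := by
    simpa using ENNReal.tendsto_ofReal
      (tendsto_inv_atTop_zero.comp (tendsto_pow_atTop_atTop_of_one_lt one_lt_two))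
  exact le_antisymm (ge_of_tendsto' hlim h) bot_le

lemma ofReal_mul_le_of_dyadic_coding {X : Type*} [MetricSpace X] {G : ℝ → X} {ρ : ℕ → ℝ}
    {g : ℝ → ℝ} {K : ℝ} (hρ : ∀ n, 0 < ρ n) (hρ_lim : Tendsto ρ atTop (𝓝 0))
    (hcyl : ∀ n (S : Set X), Bornology.IsBounded S → diam S ≤ ρ n →
      volume.restrict (Ico (0 : ℝ) 1) (G ⁻¹' S) ≤ ENNReal.ofReal ((2 ^ n)⁻¹))
    (hg : MonotoneOn g (Ioi 0)) (hK : ∀ n, K ≤ 2 ^ n * g (ρ (n + 1)))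
    {S : Set X} (hS : Bornology.IsBounded S) :
    ENNReal.ofReal K * volume.restrict (Ico (0 : ℝ) 1) (G ⁻¹' S) ≤ ENNReal.ofReal (g (diam S)) := by
  rcases (diam_nonneg (s := S)).eq_or_lt with hd | hd
  · rw [eq_zero_of_forall_le_inv_two_pow fun n => hcyl n S hS (hd ▸ (hρ n).le), mul_zero]
    exact zero_le
  obtain ⟨n, hn, hdn⟩ := exists_scale_between hρ_lim hd
  have hvol : volume.restrict (Ico (0 : ℝ) 1) (G ⁻¹' S) ≤ ENNReal.ofReal ((2 ^ n)⁻¹) := by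
    rcases hdn with rfl | hdn
    · calc volume.restrict (Ico (0 : ℝ) 1) (G ⁻¹' S) ≤ volume.restrict (Ico (0 : ℝ) 1) univ :=
            measure_mono (subset_univ _)
        _ = _ := by simp
    · exact hcyl n S hS hdn
  calc ENNReal.ofReal K * volume.restrict (Ico (0 : ℝ) 1) (G ⁻¹' S)
      ≤ ENNReal.ofReal K * ENNReal.ofReal ((2 ^ n)⁻¹) := by gcongr
    _ = ENNReal.ofReal (K * (2 ^ n)⁻¹) := (ENNReal.ofReal_mul' (by positivity)).symm
    _ ≤ ENNReal.ofReal (g (ρ (n + 1))) := by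
        gcongr
        rw [mul_inv_le_iff₀ (by positivity), mul_comm]
        exact hK n
    _ ≤ ENNReal.ofReal (g (diam S)) := by gcongr; exact hg (hρ _) hd hn.le

section Scales

/-- Closed form of the recursion `β ρ (n + 1) = (β ρ n) ^ α`, `ρ 0 = r`. -/
noncomputable def cantorScale (β r α : ℝ) (n : ℕ) : ℝ := (β * r) ^ (α ^ n) / β

variable {β r α : ℝ}

lemma mul_cantorScale (hβ : β ≠ 0) (n : ℕ) : β * cantorScale β r α n = (β * r) ^ (α ^ n) :=
  mul_div_cancel₀ _ hβ

lemma cantorScale_zero (hβ : β ≠ 0) : cantorScale β r α 0 = r := by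
  simp [cantorScale, hβ]

lemma cantorScale_pos (hβ : 0 < β) (hr : 0 < r) (n : ℕ) : 0 < cantorScale β r α n := by
  unfold cantorScale; positivity

lemma cantorScale_le (hβ : 0 < β) (hr : 0 < r) (hβr : β * r ≤ 1) (hα : 1 ≤ α) (n : ℕ) :
    cantorScale β r α n ≤ r := by
  rw [cantorScale, div_le_iff₀' hβ]
  calc (β * r) ^ (α ^ n) ≤ (β * r) ^ (1 : ℝ) :=
        Real.rpow_le_rpow_of_exponent_ge (by positivity) hβr (one_le_pow₀ hα)
    _ = β * r := Real.rpow_one _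

lemma cantorScale_succ_le (hβ : 0 < β) (hr : 0 < r) {c : ℝ} (hβc : β ^ (α - 1) ≤ c / 2 ^ α)
    (n : ℕ) : cantorScale β r α (n + 1) ≤ c * (cantorScale β r α n / 2) ^ α := by
  set x := cantorScale β r α n
  have hx : 0 < x := cantorScale_pos hβ hr n
  have hsucc : cantorScale β r α (n + 1) = β ^ (α - 1) * x ^ α := by
    refine mul_left_cancel₀ hβ.ne' ?_
    rw [mul_cantorScale hβ.ne', pow_succ, Real.rpow_mul (by positivity), ← mul_cantorScale hβ.ne',
      Real.mul_rpow hβ.le hx.le, Real.rpow_sub_one hβ.ne']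
    field_simp
  calc cantorScale β r α (n + 1) = β ^ (α - 1) * x ^ α := hsucc
    _ ≤ c / 2 ^ α * x ^ α := by gcongr
    _ = c * (x / 2) ^ α := by rw [Real.div_rpow hx.le zero_le_two]; ring

lemma tendsto_cantorScale (hβ : 0 < β) (hr : 0 < r) (hβr : β * r < 1) (hα : 1 < α) :
    Tendsto (cantorScale β r α) atTop (𝓝 0) := by
  have := ((tendsto_rpow_atTop_of_base_lt_one _ (by linarith [mul_pos hβ hr]) hβr).comp
    (tendsto_pow_atTop_atTop_of_one_lt hα)).div_const β
  exact (zero_div β) ▸ this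

lemma log_one_div_mul_cantorScale (hβ : 0 < β) (hr : 0 < r) (n : ℕ) :
    Real.log (1 / (β * cantorScale β r α n)) = α ^ n * Real.log (1 / (β * r)) := by
  rw [mul_cantorScale hβ.ne', one_div, one_div, Real.log_inv, Real.log_inv,
    Real.log_rpow (by positivity), mul_neg]

end Scales

section Gauge

variable {β γ : ℝ}

lemma log_one_div_mul_pos (hβ : 0 < β) {t : ℝ} (ht : 0 < t) (hβt : β * t < 1) :
    0 < Real.log (1 / (β * t)) :=
  Real.log_pos ((one_lt_div (by positivity)).2 hβt)

lemma gauge_monotoneOn (hβ : 0 < β) (hγ : 0 ≤ γ) {T : ℝ} (hβT : β * T ≤ 1) :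
    MonotoneOn (fun t : ℝ => Real.log (1 / (β * t)) ^ (-γ)) (Ioo 0 T) := by
  intro s hs t ht hst
  refine Real.rpow_le_rpow_of_nonpos
    (log_one_div_mul_pos hβ ht.1 (by nlinarith [ht.2])) ?_ (neg_nonpos.2 hγ)
  exact Real.log_le_log (one_div_pos.2 (mul_pos hβ ht.1))
    (one_div_le_one_div_of_le (mul_pos hβ hs.1) (by gcongr))

lemma gauge_cantorScale {r α : ℝ} (hα : 1 < α) (hβ : 0 < β) (hr : 0 < r) (hβr : β * r < 1)
    (n : ℕ) :
    Real.log (1 / (β * cantorScale β r α n)) ^ (-Real.logb α 2) =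
      (2 ^ n)⁻¹ * Real.log (1 / (β * r)) ^ (-Real.logb α 2) := by
  have hα₀ : 0 < α := by linarith
  have hpow : (α ^ n) ^ Real.logb α 2 = 2 ^ n := by
    rw [← Real.rpow_natCast, ← Real.rpow_mul hα₀.le, mul_comm, Real.rpow_mul hα₀.le,
      Real.rpow_logb hα₀ hα.ne' two_pos, Real.rpow_natCast]
  rw [log_one_div_mul_cantorScale hβ hr, Real.mul_rpow (by positivity)
    (log_one_div_mul_pos hβ hr hβr).le, Real.rpow_neg (by positivity), hpow]

lemma two_rpow_neg_mul_gauge_le {r : ℝ} (hβ : 0 < β) (hr : 0 < r) (hβr : β * r ≤ 1 / 4)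
    (hγ : 0 ≤ γ) :
    2 ^ (-γ) * Real.log (1 / (β * (2 * r))) ^ (-γ) ≤ Real.log (1 / (β * r)) ^ (-γ) := by
  have hlog2 : Real.log 2 ≤ Real.log (1 / (β * (2 * r))) :=
    Real.log_le_log two_pos (by rw [le_div_iff₀ (by positivity)]; linarith)
  have hsplit : Real.log (1 / (β * r)) = Real.log 2 + Real.log (1 / (β * (2 * r))) := by
    rw [← Real.log_mul two_ne_zero (by positivity)]
    congr 1
    field_simp
  rw [← Real.mul_rpow zero_le_two (Real.log_pos one_lt_two |>.le.trans hlog2)]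
  have hlog2_pos := Real.log_pos one_lt_two
  exact Real.rpow_le_rpow_of_nonpos (by rw [hsplit]; linarith) (by rw [hsplit]; linarith)
    (neg_nonpos.2 hγ)

lemma gauge_two_mul_le_two_pow_mul_gauge_cantorScale {r α : ℝ} (hα : 1 < α) (hβ : 0 < β)
    (hr : 0 < r) (hβr : β * r ≤ 1 / 4) (n : ℕ) :
    2⁻¹ * 2 ^ (-Real.logb α 2) * Real.log (1 / (β * (2 * r))) ^ (-Real.logb α 2) ≤
      2 ^ n * Real.log (1 / (β * cantorScale β r α (n + 1))) ^ (-Real.logb α 2) := by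
  set γ := Real.logb α 2
  calc 2⁻¹ * 2 ^ (-γ) * Real.log (1 / (β * (2 * r))) ^ (-γ)
      = 2⁻¹ * (2 ^ (-γ) * Real.log (1 / (β * (2 * r))) ^ (-γ)) := mul_assoc _ _ _
    _ ≤ 2⁻¹ * Real.log (1 / (β * r)) ^ (-γ) := by
        gcongr; exact two_rpow_neg_mul_gauge_le hβ hr hβr (Real.logb_pos hα one_lt_two).le
    _ = 2 ^ n * ((2 ^ (n + 1))⁻¹ * Real.log (1 / (β * r)) ^ (-γ)) := by
        rw [pow_succ]; field_simp
    _ = 2 ^ n * Real.log (1 / (β * cantorScale β r α (n + 1))) ^ (-γ) := by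
        rw [gauge_cantorScale hα hβ hr (by linarith)]

end Gauge

theorem CondU1.exists_dyadic_coding {E : Set ℂ} {α : ℝ} (hU : CondU1 E α) (hE : IsClosed E)
    (hα : 1 < α) :
    ∃ β > (0 : ℝ), β ≤ 1 ∧ ∃ r₀ > (0 : ℝ), ∀ a ∈ E, ∀ r ∈ Ioo 0 r₀, ∃ G : ℝ → ℂ,
      (∀ t, G t ∈ E ∩ closedBall a r) ∧
      ∀ n (S : Set ℂ), Bornology.IsBounded S → diam S ≤ cantorScale β r α n →
        volume.restrict (Ico (0 : ℝ) 1) (G ⁻¹' S) ≤ ENNReal.ofReal ((2 ^ n)⁻¹) := by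
  obtain ⟨C, hC, r₁, hr₁, hann⟩ := hU
  obtain ⟨c, hc_def⟩ : ∃ c, c = min C 1 / 4 := ⟨_, rfl⟩
  have hc : 0 < c := by rw [hc_def]; positivity
  have hc₁ : c ≤ 1 := by rw [hc_def]; linarith [min_le_right C 1]
  have hc2 : c / 2 ^ α ≤ 1 :=
    div_le_one_of_le₀ (hc₁.trans (Real.one_le_rpow one_le_two (by linarith))) (by positivity)
  -- `β ^ (α - 1) = c / 2 ^ α` is what makes `4 ρ (n + 1) ≤ C (ρ n / 2) ^ α` (`cantorScale_succ_le`).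
  set β := (c / 2 ^ α) ^ (α - 1)⁻¹
  have hβ : 0 < β := by positivity
  have hβc : β ^ (α - 1) = c / 2 ^ α := Real.rpow_inv_rpow (by positivity) (by linarith)
  have hβ₁ : β ≤ 1 := Real.rpow_le_one (by positivity) hc2 (inv_nonneg.2 (by linarith))
  refine ⟨β, hβ, hβ₁, min r₁ 1, lt_min hr₁ one_pos, fun a ha r hr => ?_⟩
  set ρ := cantorScale β r α
  have hρ : ∀ n, 0 < ρ n := cantorScale_pos hβ hr.1
  have hρr : ∀ n, ρ n ≤ r := cantorScale_le hβ hr.1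
    (by nlinarith [hr.2.trans_le (min_le_right r₁ 1)]) hα.le
  have hhalf : ∀ n, ρ (n + 1) ≤ ρ n / 2 := fun n =>
    calc ρ (n + 1) ≤ c * (ρ n / 2) ^ α := cantorScale_succ_le hβ hr.1 hβc.le n
      _ ≤ 1 * (ρ n / 2) ^ (1 : ℝ) :=
        mul_le_mul hc₁ (Real.rpow_le_rpow_of_exponent_ge (by linarith [hρ n])
          (by linarith [hρr n, hr.2.trans_le (min_le_right r₁ 1)]) hα.le)
          (Real.rpow_nonneg (by linarith [hρ n]) _) zero_le_one
      _ = ρ n / 2 := by simp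
  have hchild : ∀ x ∈ E, ∀ n, ∃ y ∈ E, 4 * ρ (n + 1) ≤ dist y x ∧ dist y x ≤ ρ n / 2 := by
    intro x hx n
    obtain ⟨y, ⟨hy, hy'⟩, hyE⟩ := hann x hx (ρ n / 2)
      ⟨by linarith [hρ n], by linarith [hρr n, hr.2.trans_le (min_le_left r₁ 1)]⟩
    refine ⟨y, hyE, ?_, hy'⟩
    calc 4 * ρ (n + 1) ≤ min C 1 * (ρ n / 2) ^ α := by
          have := cantorScale_succ_le hβ hr.1 hβc.le n (r := r)
          rw [hc_def] at this
          linarith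
      _ ≤ C * (ρ n / 2) ^ α := mul_le_mul_of_nonneg_right (min_le_left C 1)
          (Real.rpow_nonneg (by linarith [hρ n]) _)
      _ ≤ dist y x := hy
  simpa only [ρ, cantorScale_zero hβ.ne'] using _root_.exists_dyadic_coding hE ha hρ hhalf hchild

theorem stmt_13 (E : Set ℂ) (hcl : IsClosed E)
    (α : ℝ) (hα : 1 < α) (hU : CondU1 E α) :
    ∃ A > (0 : ℝ), ∃ C > (0 : ℝ), ∃ r₀ > (0 : ℝ), ∃ γ > (0 : ℝ),
      (∀ t ∈ Set.Ioo (0 : ℝ) (2 * r₀), 0 < (Real.log (1 / (C * t))) ^ (-γ)) ∧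
      MonotoneOn (fun t : ℝ => (Real.log (1 / (C * t))) ^ (-γ))
        (Set.Ioo (0 : ℝ) (2 * r₀)) ∧
      ∀ g : ℝ → ℝ, (∀ t ∈ Set.Ioi (0 : ℝ), 0 < g t) →
        MonotoneOn g (Set.Ioi (0 : ℝ)) →
        (∀ t ∈ Set.Ioo (0 : ℝ) (2 * r₀), g t = (Real.log (1 / (C * t))) ^ (-γ)) →
        ∀ a ∈ E, ∀ r ∈ Set.Ioo (0 : ℝ) r₀,
          ENNReal.ofReal (A * g (2 * r)) ≤ hContent g (E ∩ closedBall a r) := by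
  obtain ⟨β, hβ, hβ₁, r₁, hr₁, hcoding⟩ := hU.exists_dyadic_coding hcl hα
  set γ := Real.logb α 2
  have hγ : 0 < γ := Real.logb_pos hα one_lt_two
  set r₀ := min r₁ (1 / 4)
  have hβr₀ : β * (2 * r₀) ≤ 1 / 2 := by nlinarith [min_le_right r₁ (1 / 4)]
  refine ⟨2⁻¹ * 2 ^ (-γ), by positivity, β, hβ, r₀, lt_min hr₁ (by norm_num), γ, hγ,
    fun t ht => Real.rpow_pos_of_pos (log_one_div_mul_pos hβ ht.1 (by nlinarith [ht.2])) _,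
    gauge_monotoneOn hβ hγ.le (by linarith), ?_⟩
  intro g _ hg_mono hg a ha r hr
  have hβr : β * r ≤ 1 / 4 := by nlinarith [hr.1, hr.2]
  obtain ⟨G, hGF, hcyl⟩ := hcoding a ha r ⟨hr.1, hr.2.trans_le (min_le_left _ _)⟩
  have hK : ∀ n, 2⁻¹ * 2 ^ (-γ) * g (2 * r) ≤ 2 ^ n * g (cantorScale β r α (n + 1)) := by
    intro n
    have hρ := cantorScale_le hβ hr.1 (by linarith) hα.le (n + 1)
    rw [hg _ ⟨by linarith [hr.1], by linarith [hr.2]⟩,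
      hg _ ⟨cantorScale_pos hβ hr.1 _, by linarith [hr.1, hr.2]⟩]
    exact gauge_two_mul_le_two_pow_mul_gauge_cantorScale hα hβ hr.1 hβr n
  have hF : G ⁻¹' (E ∩ closedBall a r) = univ := eq_univ_of_forall hGF
  calc ENNReal.ofReal (2⁻¹ * 2 ^ (-γ) * g (2 * r))
      = (ENNReal.ofReal (2⁻¹ * 2 ^ (-γ) * g (2 * r)) • volume.restrict (Ico (0 : ℝ) 1))
          (G ⁻¹' (E ∩ closedBall a r)) := by simp [hF]
    _ ≤ hContent g (E ∩ closedBall a r) :=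
      le_hContent_of_forall_closedBall _ G (fun z s _ => ofReal_mul_le_of_dyadic_coding
        (cantorScale_pos hβ hr.1) (tendsto_cantorScale hβ hr.1 (by linarith) hα)
        hcyl hg_mono hK isBounded_closedBall) _
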